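/- Let 1 < p < ∞ and let φ be a non-negative function with φ ∈ L^1(0,∞) and supp φ ⊆ [1,∞). If E(φ,p) < ∞, then the Hausdorff operator H_{α,β,φ} is bounded from L^p((0,1), A_{α,β}) to L^p((0,1), A_{α,β}), and for every f ∈ L^p((0,1), A_{α,β}) (extended by 0 outside (0,1)) one has ‖H_{α,β,φ} f‖_{L^p((0,1),A_{α,β})} ≤ A_{α,β}(1)^{1-1/p} · E(φ,p) · ‖f‖_{L^p((0,1),A_{α,β})}. -/

import Mathlib

open MeasureTheory Set ENNReal

/-- The weight `A_{α,β}(x) = (sinh|x|)^{2α+1} (cosh|x|)^{2β+1}`. -/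
noncomputable def Aw (α β : ℝ) (x : ℝ) : ℝ :=
  Real.sinh |x| ^ (2 * α + 1) * Real.cosh |x| ^ (2 * β + 1)

/-- The Hausdorff operator associated with the Opdam–Cherednik transform. -/
noncomputable def Hop (α β : ℝ) (φ f : ℝ → ℝ) (x : ℝ) : ℝ :=
  ∫ t in Set.Ioi (0 : ℝ), (φ t / t) * f (x / t) * (Aw α β (x / t) / Aw α β x)

/-- The `L^p(I, A_{α,β})` norm, as an extended nonnegative real. -/
noncomputable def lpN (α β p : ℝ) (I : Set ℝ) (f : ℝ → ℝ) : ℝ≥0∞ :=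
  (∫⁻ x in I, ENNReal.ofReal (|f x| ^ p * Aw α β x)) ^ (1 / p)

/-!
For `x ∈ (0,1)` only `t ≥ 1` contributes to `H f (x)`, and there `A(x/t) ≤ A(x)` since `A` increases
with `|x|`. Hölder's inequality in `t` for the weight `φ(t) t^{1/p-1} dt`, whose mass is `E(φ,p)`,
gives `|H f(x)|^p A(x) ≤ E^{p-1} ∫_1^∞ φ(t) t^{1/p-2} |f(x/t)|^p A(x/t) dt`. Integrating over
`x ∈ (0,1)`, exchanging the integrals and substituting `y = x/t` yields `‖H f‖ ≤ E(φ,p) ‖f‖`,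
which implies the claim because `A(1) ≥ 1`.
-/

lemma Aw_nonneg (α β x : ℝ) : 0 ≤ Aw α β x :=
  mul_nonneg (Real.rpow_nonneg (Real.sinh_nonneg_iff.2 (abs_nonneg x)) _)
    (Real.rpow_nonneg (Real.cosh_pos _).le _)

lemma Aw_pos (α β : ℝ) {x : ℝ} (hx : x ≠ 0) : 0 < Aw α β x :=
  mul_pos (Real.rpow_pos_of_pos (Real.sinh_pos_iff.2 (abs_pos.2 hx)) _)
    (Real.rpow_pos_of_pos (Real.cosh_pos _) _)

lemma measurable_Aw (α β : ℝ) : Measurable (Aw α β) := by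
  unfold Aw; fun_prop

lemma Aw_le_Aw_of_abs_le {α β : ℝ} (hα : 0 ≤ 2 * α + 1) (hβ : 0 ≤ 2 * β + 1) {y z : ℝ}
    (h : |y| ≤ |z|) : Aw α β y ≤ Aw α β z := by
  unfold Aw
  gcongr
  · exact Real.sinh_le_sinh.2 h
  · exact Real.cosh_le_cosh.2 (by rwa [abs_abs, abs_abs])

lemma one_le_Aw_one {α β : ℝ} (hα : 0 ≤ 2 * α + 1) (hβ : 0 ≤ 2 * β + 1) : 1 ≤ Aw α β 1 := by
  rw [Aw, abs_one]
  exact one_le_mul_of_one_le_of_one_le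
    (Real.one_le_rpow (Real.self_le_sinh_iff.2 zero_le_one) hα)
    (Real.one_le_rpow (Real.one_le_cosh 1) hβ)

lemma div_rpow_mul_le {a b p : ℝ} (ha : 0 ≤ a) (hab : a ≤ b) (hp : 1 ≤ p) :
    (a / b) ^ p * b ≤ a := by
  rcases (ha.trans hab).eq_or_lt with rfl | hb
  · simp [ha]
  calc (a / b) ^ p * b ≤ a / b * b :=
        mul_le_mul_of_nonneg_right
          (Real.rpow_le_self_of_le_one (div_nonneg ha hb.le) ((div_le_one hb).2 hab) hp) hb.le
    _ = a := div_mul_cancel₀ a hb.ne'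

theorem ENNReal.lintegral_mul_rpow_le {X : Type*} [MeasurableSpace X] {μ : Measure X}
    {w g : X → ℝ≥0∞} (hw : AEMeasurable w μ) (hg : AEMeasurable g μ) {p : ℝ} (hp : 1 ≤ p) :
    (∫⁻ a, w a * g a ∂μ) ^ p ≤ (∫⁻ a, w a ∂μ) ^ (p - 1) * ∫⁻ a, w a * g a ^ p ∂μ := by
  have hp0 : 0 < p := by linarith
  have hq : 0 ≤ 1 - 1 / p := sub_nonneg.2 ((div_le_one hp0).2 hp)
  have split : ∀ a, w a ^ (1 - 1 / p) * (w a * g a ^ p) ^ (1 / p) = w a * g a := fun a => by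
    rw [ENNReal.mul_rpow_of_nonneg _ _ (by positivity), ← ENNReal.rpow_mul,
      mul_one_div_cancel hp0.ne', ENNReal.rpow_one, ← mul_assoc,
      ← ENNReal.rpow_add_of_nonneg _ _ hq (by positivity), sub_add_cancel, ENNReal.rpow_one]
  have holder := ENNReal.lintegral_mul_norm_pow_le (f := w) (g := fun a => w a * g a ^ p) hw
    (hw.mul (hg.pow_const p)) hq (by positivity) (sub_add_cancel 1 (1 / p))
  simp only [split] at holder
  calc (∫⁻ a, w a * g a ∂μ) ^ p
      ≤ ((∫⁻ a, w a ∂μ) ^ (1 - 1 / p) * (∫⁻ a, w a * g a ^ p ∂μ) ^ (1 / p)) ^ p :=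
        ENNReal.rpow_le_rpow holder hp0.le
    _ = (∫⁻ a, w a ∂μ) ^ (p - 1) * ∫⁻ a, w a * g a ^ p ∂μ := by
        rw [ENNReal.mul_rpow_of_nonneg _ _ hp0.le, ← ENNReal.rpow_mul, ← ENNReal.rpow_mul,
          one_div_mul_cancel hp0.ne', ENNReal.rpow_one, sub_mul, one_div_mul_cancel hp0.ne',
          one_mul]

lemma lintegral_Ioo_zero_one_comp_div {g : ℝ → ℝ≥0∞} (hg : Measurable g) {t : ℝ} (ht : 0 < t) :
    ∫⁻ x in Ioo 0 1, g (x / t) = ENNReal.ofReal t * ∫⁻ y in Ioo 0 t⁻¹, g y := by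
  have hpre : (fun x : ℝ => t⁻¹ * x) ⁻¹' Ioo 0 t⁻¹ = Ioo 0 1 := by
    ext x
    simp only [mem_preimage, mem_Ioo, mul_pos_iff_of_pos_left (inv_pos.2 ht)]
    rw [mul_lt_iff_lt_one_right (inv_pos.2 ht)]
  simp_rw [div_eq_inv_mul]
  rw [← hpre, ← setLIntegral_map measurableSet_Ioo hg (measurable_const_mul _),
    Real.map_volume_mul_left (inv_ne_zero ht.ne'),
    inv_inv, abs_of_pos ht, Measure.restrict_smul, lintegral_smul_measure, smul_eq_mul]

lemma rpow_mul_Aw_div_rpow_mul_le {α β : ℝ} (hα : 0 ≤ 2 * α + 1) (hβ : 0 ≤ 2 * β + 1) {p : ℝ}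
    (hp : 1 ≤ p) {t u x : ℝ} (ht : 1 ≤ t) (hu : 0 ≤ u) (hx : x ≠ 0) :
    (t ^ (-(1 / p)) * (u * (Aw α β (x / t) / Aw α β x))) ^ p * Aw α β x ≤
      t⁻¹ * (u ^ p * Aw α β (x / t)) := by
  have ht0 : 0 < t := zero_lt_one.trans_le ht
  have hR : 0 ≤ Aw α β (x / t) / Aw α β x := div_nonneg (Aw_nonneg α β _) (Aw_pos α β hx).le
  have hxt : |x / t| ≤ |x| := by
    rw [abs_div, abs_of_pos ht0]; exact div_le_self (abs_nonneg x) ht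
  rw [Real.mul_rpow (by positivity) (by positivity), Real.mul_rpow hu hR, ← Real.rpow_mul ht0.le,
    neg_mul, one_div_mul_cancel (by positivity), Real.rpow_neg_one]
  calc t⁻¹ * (u ^ p * (Aw α β (x / t) / Aw α β x) ^ p) * Aw α β x
      = t⁻¹ * (u ^ p * ((Aw α β (x / t) / Aw α β x) ^ p * Aw α β x)) := by ring
    _ ≤ t⁻¹ * (u ^ p * Aw α β (x / t)) := by
      gcongr
      exact div_rpow_mul_le (Aw_nonneg α β _) (Aw_le_Aw_of_abs_le hα hβ hxt) hp

/-- The integrand of `E(φ, p)`. -/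
noncomputable def Edensity (φ : ℝ → ℝ) (p t : ℝ) : ℝ≥0∞ := ENNReal.ofReal (φ t / t * t ^ (1 / p))

lemma aemeasurable_Edensity {μ : Measure ℝ} {φ : ℝ → ℝ} (hφ : AEMeasurable φ μ) (p : ℝ) :
    AEMeasurable (Edensity φ p) μ :=
  ((hφ.div measurable_id.aemeasurable).mul (by fun_prop)).ennreal_ofReal

section Hausdorff

variable {α β : ℝ} {φ : ℝ → ℝ}

lemma ofReal_abs_Hop_le (hφ : ∀ t, 0 ≤ φ t) (hsupp : Function.support φ ⊆ Ici 1)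
    (f : ℝ → ℝ) (x : ℝ) :
    ENNReal.ofReal |Hop α β φ f x| ≤
      ∫⁻ t in Ioi 1, ENNReal.ofReal (φ t / t * |f (x / t)| * (Aw α β (x / t) / Aw α β x)) := by
  set F : ℝ → ℝ≥0∞ := fun t => ‖φ t / t * f (x / t) * (Aw α β (x / t) / Aw α β x)‖ₑ
  have hF : F.support ⊆ Ici 1 := fun t ht => hsupp fun h => ht (by simp [F, h])
  calc ENNReal.ofReal |Hop α β φ f x| ≤ ∫⁻ t in Ioi 0, F t := by
        rw [← Real.enorm_eq_ofReal_abs]; exact enorm_integral_le_lintegral_enorm _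
    _ ≤ ∫⁻ t, F t := setLIntegral_le_lintegral _ _
    _ = ∫⁻ t in Ioi 1, F t := by
        rw [← setLIntegral_eq_of_support_subset hF, setLIntegral_congr Ioi_ae_eq_Ici]
    _ = _ := setLIntegral_congr_fun measurableSet_Ioi fun t (ht : 1 < t) => by
        have ht0 : 0 < t := zero_lt_one.trans ht
        simp only [F, Real.enorm_eq_ofReal_abs, abs_mul]
        rw [abs_of_nonneg (div_nonneg (hφ t) ht0.le),
          abs_of_nonneg (div_nonneg (Aw_nonneg α β _) (Aw_nonneg α β _))]

lemma ofReal_abs_Hop_rpow_mul_Aw_le (hφ : ∀ t, 0 ≤ φ t) (hsupp : Function.support φ ⊆ Ici 1)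
    (hα : 0 ≤ 2 * α + 1) (hβ : 0 ≤ 2 * β + 1) {p : ℝ} (hp : 1 ≤ p)
    (hφm : AEMeasurable φ (volume.restrict (Ioi 1))) {f : ℝ → ℝ} (hf : Measurable f) {x : ℝ}
    (hx : x ≠ 0) :
    ENNReal.ofReal (|Hop α β φ f x| ^ p * Aw α β x) ≤
      (∫⁻ t in Ioi 1, Edensity φ p t) ^ (p - 1) * ∫⁻ t in Ioi 1, Edensity φ p t *
        (ENNReal.ofReal t⁻¹ * ENNReal.ofReal (|f (x / t)| ^ p * Aw α β (x / t))) := by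
  have hp0 : 0 < p := zero_lt_one.trans_le hp
  have hAx := Aw_pos α β hx
  set G : ℝ → ℝ≥0∞ :=
    fun t => ENNReal.ofReal (t ^ (-(1 / p)) * (|f (x / t)| * (Aw α β (x / t) / Aw α β x)))
  have hG : Measurable G := by
    have := measurable_Aw α β
    fun_prop
  have hfactor : ENNReal.ofReal |Hop α β φ f x| ≤ ∫⁻ t in Ioi 1, Edensity φ p t * G t := by
    refine (ofReal_abs_Hop_le hφ hsupp f x).trans_eq
      (setLIntegral_congr_fun measurableSet_Ioi fun t (ht : 1 < t) => ?_)
    have ht0 : 0 < t := zero_lt_one.trans ht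
    rw [Edensity, ← ENNReal.ofReal_mul (by have := hφ t; positivity), Real.rpow_neg ht0.le]
    have : 0 < t ^ (1 / p) := by positivity
    field_simp
  have hkernel : ∀ t ∈ Ioi (1 : ℝ), G t ^ p * ENNReal.ofReal (Aw α β x) ≤
      ENNReal.ofReal t⁻¹ * ENNReal.ofReal (|f (x / t)| ^ p * Aw α β (x / t)) :=
      fun t (ht : 1 < t) => by
    have ht0 : 0 < t := zero_lt_one.trans ht
    have hR : 0 ≤ Aw α β (x / t) / Aw α β x := div_nonneg (Aw_nonneg α β _) hAx.le
    rw [ENNReal.ofReal_rpow_of_nonneg (by positivity) hp0.le, ← ENNReal.ofReal_mul (by positivity),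
      ← ENNReal.ofReal_mul (by positivity)]
    exact ENNReal.ofReal_le_ofReal (rpow_mul_Aw_div_rpow_mul_le hα hβ hp ht.le (abs_nonneg _) hx)
  calc ENNReal.ofReal (|Hop α β φ f x| ^ p * Aw α β x)
      = ENNReal.ofReal |Hop α β φ f x| ^ p * ENNReal.ofReal (Aw α β x) := by
        rw [ENNReal.ofReal_mul (by positivity), ENNReal.ofReal_rpow_of_nonneg (abs_nonneg _) hp0.le]
    _ ≤ (∫⁻ t in Ioi 1, Edensity φ p t * G t) ^ p * ENNReal.ofReal (Aw α β x) := by gcongr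
    _ ≤ (∫⁻ t in Ioi 1, Edensity φ p t) ^ (p - 1) * (∫⁻ t in Ioi 1, Edensity φ p t * G t ^ p) *
          ENNReal.ofReal (Aw α β x) := by
        gcongr
        exact ENNReal.lintegral_mul_rpow_le (aemeasurable_Edensity hφm p) hG.aemeasurable hp
    _ = (∫⁻ t in Ioi 1, Edensity φ p t) ^ (p - 1) *
          ∫⁻ t in Ioi 1, Edensity φ p t * (G t ^ p * ENNReal.ofReal (Aw α β x)) := by
        rw [mul_assoc, ← lintegral_mul_const' _ _ ENNReal.ofReal_ne_top]
        simp only [mul_assoc]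
    _ ≤ _ := mul_le_mul_right
        (setLIntegral_mono' measurableSet_Ioi fun t ht => mul_le_mul_right (hkernel t ht) _) _

lemma lintegral_Hop_rpow_mul_Aw_le (hφ : ∀ t, 0 ≤ φ t) (hsupp : Function.support φ ⊆ Ici 1)
    (hα : 0 ≤ 2 * α + 1) (hβ : 0 ≤ 2 * β + 1) {p : ℝ} (hp : 1 ≤ p)
    (hφm : AEMeasurable φ (volume.restrict (Ioi 1))) (hE : ∫⁻ t in Ioi 1, Edensity φ p t ≠ ⊤)
    {f : ℝ → ℝ} (hf : Measurable f) :
    ∫⁻ x in Ioo 0 1, ENNReal.ofReal (|Hop α β φ f x| ^ p * Aw α β x) ≤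
      (∫⁻ t in Ioi 1, Edensity φ p t) ^ p *
        ∫⁻ x in Ioo 0 1, ENNReal.ofReal (|f x| ^ p * Aw α β x) := by
  set E := ∫⁻ t in Ioi 1, Edensity φ p t
  set g : ℝ → ℝ≥0∞ := fun y => ENNReal.ofReal (|f y| ^ p * Aw α β y)
  have hg : Measurable g := by
    have := measurable_Aw α β
    fun_prop
  have hinner : ∀ t ∈ Ioi (1 : ℝ),
      ∫⁻ x in Ioo 0 1, Edensity φ p t * (ENNReal.ofReal t⁻¹ * g (x / t)) ≤
        Edensity φ p t * ∫⁻ y in Ioo 0 1, g y := fun t (ht : 1 < t) => by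
    have ht0 : 0 < t := zero_lt_one.trans ht
    rw [lintegral_const_mul' (Edensity φ p t) _ ENNReal.ofReal_ne_top,
      lintegral_const_mul' _ _ ENNReal.ofReal_ne_top,
      lintegral_Ioo_zero_one_comp_div hg ht0, ← mul_assoc (ENNReal.ofReal t⁻¹),
      ← ENNReal.ofReal_mul (inv_nonneg.2 ht0.le),
      inv_mul_cancel₀ ht0.ne', ENNReal.ofReal_one, one_mul]
    gcongr
    exact inv_le_one_of_one_le₀ ht.le
  have hswap : AEMeasurable
      (Function.uncurry fun x t => Edensity φ p t * (ENNReal.ofReal t⁻¹ * g (x / t)))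
      ((volume.restrict (Ioo 0 1)).prod (volume.restrict (Ioi 1))) :=
    (aemeasurable_Edensity hφm p).comp_snd.mul (by fun_prop)
  calc ∫⁻ x in Ioo 0 1, ENNReal.ofReal (|Hop α β φ f x| ^ p * Aw α β x)
      ≤ ∫⁻ x in Ioo 0 1, E ^ (p - 1) *
          ∫⁻ t in Ioi 1, Edensity φ p t * (ENNReal.ofReal t⁻¹ * g (x / t)) :=
        setLIntegral_mono' measurableSet_Ioo fun x hx =>
          ofReal_abs_Hop_rpow_mul_Aw_le hφ hsupp hα hβ hp hφm hf hx.1.ne'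
    _ = E ^ (p - 1) * ∫⁻ t in Ioi 1, ∫⁻ x in Ioo 0 1,
          Edensity φ p t * (ENNReal.ofReal t⁻¹ * g (x / t)) := by
        rw [lintegral_const_mul' _ _ (ENNReal.rpow_ne_top_of_nonneg (sub_nonneg.2 hp) hE),
          lintegral_lintegral_swap hswap]
    _ ≤ E ^ (p - 1) * ∫⁻ t in Ioi 1, Edensity φ p t * ∫⁻ y in Ioo 0 1, g y :=
        mul_le_mul_right (setLIntegral_mono' measurableSet_Ioi hinner) _
    _ = E ^ p * ∫⁻ y in Ioo 0 1, g y := by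
        rw [lintegral_mul_const'' _ (aemeasurable_Edensity hφm p), ← mul_assoc]
        congr 1
        simpa using
          (ENNReal.rpow_add_of_nonneg (x := E) (p - 1) 1 (sub_nonneg.2 hp) zero_le_one).symm

end Hausdorff

lemma lpN_le_mul_of_lintegral_le {α β p : ℝ} (hp : 0 < p) {I : Set ℝ} {h f : ℝ → ℝ} {C : ℝ≥0∞}
    (H : ∫⁻ x in I, ENNReal.ofReal (|h x| ^ p * Aw α β x) ≤
      C ^ p * ∫⁻ x in I, ENNReal.ofReal (|f x| ^ p * Aw α β x)) :
    lpN α β p I h ≤ C * lpN α β p I f :=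
  calc lpN α β p I h ≤ (C ^ p * ∫⁻ x in I, ENNReal.ofReal (|f x| ^ p * Aw α β x)) ^ (1 / p) :=
        ENNReal.rpow_le_rpow H (by positivity)
    _ = C * lpN α β p I f := by
        rw [lpN, ENNReal.mul_rpow_of_nonneg _ _ (by positivity), ← ENNReal.rpow_mul,
          mul_one_div_cancel hp.ne', ENNReal.rpow_one]

theorem hausdorff_Lp_unit_interval_bounded_general (α β : ℝ) (hβ : -(1/2 : ℝ) ≤ β)
    (hα : -(1/2 : ℝ) < α)
    (p : ℝ) (hp : 1 < p)
    (φ : ℝ → ℝ) (hφpos : ∀ t, 0 ≤ φ t) (hφint : IntegrableOn φ (Set.Ioi 0))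
    (hsupp : Function.support φ ⊆ Set.Ici 1)
    (Ep : ℝ≥0∞)
    (hE : Ep = ∫⁻ t in Set.Ioi (1 : ℝ), ENNReal.ofReal ((φ t / t) * t ^ (1/p)))
    (hEfin : Ep < ⊤)
    (f : ℝ → ℝ) (hf : Measurable f) :
    lpN α β p (Set.Ioo 0 1) (Hop α β φ f) ≤
      ENNReal.ofReal (Aw α β 1 ^ (1 - 1/p)) * Ep * lpN α β p (Set.Ioo 0 1) f := by
  have h2α : 0 ≤ 2 * α + 1 := by linarith
  have h2β : 0 ≤ 2 * β + 1 := by linarith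
  have hEp : Ep = ∫⁻ t in Ioi 1, Edensity φ p t := hE
  have hφm : AEMeasurable φ (volume.restrict (Ioi 1)) :=
    (hφint.mono_set (Ioi_subset_Ioi zero_le_one)).aemeasurable
  have hHf : lpN α β p (Ioo 0 1) (Hop α β φ f) ≤ Ep * lpN α β p (Ioo 0 1) f := by
    rw [hEp] at hEfin ⊢
    exact lpN_le_mul_of_lintegral_le (by linarith)
      (lintegral_Hop_rpow_mul_Aw_le hφpos hsupp h2α h2β hp.le hφm hEfin.ne hf)
  have hconst : 1 ≤ ENNReal.ofReal (Aw α β 1 ^ (1 - 1 / p)) :=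
    ENNReal.one_le_ofReal.2 (Real.one_le_rpow (one_le_Aw_one h2α h2β)
      (sub_nonneg.2 ((div_le_one (by linarith)).2 hp.le)))
  rw [mul_assoc]
  exact hHf.trans (le_mul_of_one_le_left' hconst)

/-- If `E(φ,p) < ∞` then the Hausdorff operator is bounded on `L^p((0,1), A_{α,β})`. -/
theorem hausdorff_Lp_unit_interval_bounded (α β : ℝ) (hβα : β ≤ α) (hβ : -(1/2 : ℝ) ≤ β)
    (hα : -(1/2 : ℝ) < α)
    (p : ℝ) (hp : 1 < p)
    (φ : ℝ → ℝ) (hφpos : ∀ t, 0 ≤ φ t) (hφint : IntegrableOn φ (Set.Ioi 0))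
    (hsupp : Function.support φ ⊆ Set.Ici 1)
    (Ep : ℝ≥0∞)
    (hE : Ep = ∫⁻ t in Set.Ioi (1 : ℝ), ENNReal.ofReal ((φ t / t) * t ^ (1/p)))
    (hEfin : Ep < ⊤)
    (f : ℝ → ℝ) (hf : Measurable f) (hf0 : ∀ x, x ∉ Set.Ioo (0 : ℝ) 1 → f x = 0)
    (hfLp : lpN α β p (Set.Ioo 0 1) f < ⊤) :
    lpN α β p (Set.Ioo 0 1) (Hop α β φ f) ≤
      ENNReal.ofReal (Aw α β 1 ^ (1 - 1/p)) * Ep * lpN α β p (Set.Ioo 0 1) f :=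
  hausdorff_Lp_unit_interval_bounded_general α β hβ hα p hp φ hφpos hφint hsupp Ep hE hEfin f hf
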